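/- arXiv:2603.19175 — 3 statements merged into one kernel-verified Lean document; each statement's English description precedes it below -/
import Mathlib

section
/- Let R = k[x_1,…,x_n] and let J ⊂ R be a homogeneous ideal of height 2 generated by three forms f_1, f_2, f_3 of degree d, with {f_1,f_2} a regular sequence. If z_0 = (p_1,p_2,p_3)^t is a nonzero syzygy of minimal degree in Syz(J) ⊂ R^3, then the quotient module Syz(J)/R·z_0 is torsion-free. -/
open MvPolynomial

noncomputable def idealHeight {R : Type*} [CommRing R] (I : Ideal R) : ℕ∞ :=
  ⨅ (P : PrimeSpectrum R) (_ : I ≤ P.asIdeal), Order.height P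

/-!
Write `r • z = s • z₀`. Over the factorial ring `k[x]`, after cancelling the common factors of
`r` and `s`, the new `r` divides every entry of `z₀`; so it suffices that the entries of `z₀` have
no common nonunit divisor. If `z₀ = c • w`, then `w` is again a syzygy, and since the factors of a
nonzero form are forms, `w` is homogeneous of degree `δ₀ - deg c`. Minimality of `δ₀` forces
`deg c = 0`, so `c` is a nonzero constant.

Factors of forms are forms because of the substitution `p ↦ p(t • x)` into `k[x][t]`, whose
`tᵐ`-coefficient is the degree `m` component of `p`: a form of degree `m` goes to a monomial in
`t`, and a factor of a monomial over a domain is a monomial.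
-/

namespace MvPolynomial

variable {σ R : Type*} [CommRing R]

noncomputable def dilate : MvPolynomial σ R →ₐ[R] Polynomial (MvPolynomial σ R) :=
  aeval fun i => Polynomial.C (X i) * Polynomial.X

lemma dilate_monomial (d : σ →₀ ℕ) (c : R) :
    dilate (monomial d c) = Polynomial.monomial d.degree (monomial d c) := by
  rw [dilate, aeval_monomial, ← Polynomial.C_mul_X_pow_eq_monomial, monomial_eq, Finsupp.prod,
    Finsupp.prod, Finsupp.degree_apply]
  simp only [mul_pow, Finset.prod_mul_distrib, ← Polynomial.C_pow, ← map_prod,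
    Finset.prod_pow_eq_pow_sum, Polynomial.algebraMap_apply, algebraMap_eq, map_mul]
  ring

lemma coeff_dilate (p : MvPolynomial σ R) (m : ℕ) :
    (dilate p).coeff m = homogeneousComponent m p := by
  induction p using MvPolynomial.induction_on' with
  | add p q hp hq => simp only [map_add, Polynomial.coeff_add, hp, hq]
  | monomial d c =>
    classical
    rw [dilate_monomial, Polynomial.coeff_monomial]
    ext e
    rw [coeff_homogeneousComponent, apply_ite (coeff e), coeff_zero]
    by_cases hde : d = e
    · subst hde
      rfl
    · simp [coeff_monomial, hde]

lemma isHomogeneous_natDegree_dilate {p : MvPolynomial σ R}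
    (h : (dilate p).natTrailingDegree = (dilate p).natDegree) :
    p.IsHomogeneous (dilate p).natDegree := by
  intro d hd
  have hcoeff : (dilate p).coeff d.degree ≠ 0 := by
    rw [coeff_dilate]
    contrapose! hd
    simpa [coeff_homogeneousComponent] using congr_arg (coeff d) hd
  have hdeg : d.degree = (dilate p).natDegree := by
    have := Polynomial.natTrailingDegree_le_of_ne_zero hcoeff
    have := Polynomial.le_natDegree_of_ne_zero hcoeff
    omega
  rwa [Finsupp.degree_eq_weight_one] at hdeg

lemma dilate_ne_zero {p : MvPolynomial σ R} (hp : p ≠ 0) : dilate p ≠ 0 := by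
  contrapose! hp
  rw [← sum_homogeneousComponent p]
  exact Finset.sum_eq_zero fun i _ => by rw [← coeff_dilate, hp, Polynomial.coeff_zero]

lemma dilate_of_isHomogeneous {p : MvPolynomial σ R} {m : ℕ} (hp : p.IsHomogeneous m) :
    dilate p = Polynomial.monomial m p := by
  classical
  ext1 j
  rw [coeff_dilate, Polynomial.coeff_monomial,
    homogeneousComponent_of_mem ((mem_homogeneousSubmodule _ _).2 hp)]
  grind

theorem IsHomogeneous.exists_isHomogeneous_of_mul [IsDomain R] {p q : MvPolynomial σ R} {m : ℕ}
    (h : (p * q).IsHomogeneous m) (hp : p ≠ 0) (hq : q ≠ 0) :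
    ∃ a b, a + b = m ∧ p.IsHomogeneous a ∧ q.IsHomogeneous b := by
  classical
  have hpq : dilate p * dilate q = Polynomial.monomial m (p * q) := by
    rw [← map_mul, dilate_of_isHomogeneous h]
  have hdeg : (dilate p).natDegree + (dilate q).natDegree = m := by
    rw [← Polynomial.natDegree_mul (dilate_ne_zero hp) (dilate_ne_zero hq), hpq,
      Polynomial.natDegree_monomial, if_neg (mul_ne_zero hp hq)]
  have htrail : (dilate p).natTrailingDegree + (dilate q).natTrailingDegree = m := by
    rw [← Polynomial.natTrailingDegree_mul (dilate_ne_zero hp) (dilate_ne_zero hq), hpq,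
      Polynomial.natTrailingDegree_monomial (mul_ne_zero hp hq)]
  have := (dilate p).natTrailingDegree_le_natDegree
  have := (dilate q).natTrailingDegree_le_natDegree
  exact ⟨_, _, hdeg, isHomogeneous_natDegree_dilate (by omega),
    isHomogeneous_natDegree_dilate (by omega)⟩

theorem IsHomogeneous.of_mul_left [IsDomain R] {p q : MvPolynomial σ R} {a b : ℕ}
    (h : (p * q).IsHomogeneous (a + b)) (hp : p.IsHomogeneous a) (hp0 : p ≠ 0) :
    q.IsHomogeneous b := by
  rcases eq_or_ne q 0 with rfl | hq0
  · exact isHomogeneous_zero _ _ _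
  obtain ⟨a', b', hab, hpa', hqb'⟩ := h.exists_isHomogeneous_of_mul hp0 hq0
  obtain rfl : a' = a := hpa'.inj_right hp hp0
  rwa [show b = b' by omega]

end MvPolynomial

def IsPrimitiveVector {ι R : Type*} [CommRing R] (v : ι → R) : Prop :=
  ∀ c : R, (∀ i, c ∣ v i) → IsUnit c

theorem IsPrimitiveVector.mem_span_singleton_of_smul_mem {ι R : Type*} [CommRing R] [IsDomain R]
    [UniqueFactorizationMonoid R] {z₀ z : ι → R} (hz₀ : IsPrimitiveVector z₀) {r : R}
    (hr : r ≠ 0) (h : r • z ∈ Submodule.span R {z₀}) : z ∈ Submodule.span R {z₀} := by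
  obtain ⟨s, hs⟩ := Submodule.mem_span_singleton.1 h
  obtain ⟨r', s', c, hrs', rfl, rfl⟩ := UniqueFactorizationMonoid.exists_reduced_factors r hr s
  have hc : c ≠ 0 := left_ne_zero_of_mul hr
  have hz : r' • z = s' • z₀ := by
    rw [mul_smul, mul_smul] at hs
    exact (smul_right_injective _ hc hs).symm
  obtain ⟨u, rfl⟩ : IsUnit r' :=
    hz₀ r' fun i => hrs'.dvd_of_dvd_mul_left ⟨z i, (congrFun hz i).symm⟩
  refine Submodule.mem_span_singleton.2 ⟨↑u⁻¹ * s', ?_⟩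
  rw [mul_smul, ← hz, ← mul_smul, Units.inv_mul, one_smul]

theorem isPrimitiveVector_of_isHomogeneous_minimal {σ k ι M : Type*} [Field k] [AddCommGroup M]
    [Module (MvPolynomial σ k) M] [Module.IsTorsionFree (MvPolynomial σ k) M]
    (L : (ι → MvPolynomial σ k) →ₗ[MvPolynomial σ k] M) {z₀ : ι → MvPolynomial σ k} {δ₀ : ℕ}
    (hz₀L : z₀ ∈ LinearMap.ker L) (hz₀ne : z₀ ≠ 0) (hz₀h : ∀ i, (z₀ i).IsHomogeneous δ₀)
    (hz₀min : ∀ (z : ι → MvPolynomial σ k) (e : ℕ),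
      z ∈ LinearMap.ker L → z ≠ 0 → (∀ i, (z i).IsHomogeneous e) → δ₀ ≤ e) :
    IsPrimitiveVector z₀ := by
  intro c hc
  choose w hw using hc
  obtain rfl : z₀ = c • w := funext hw
  have hc0 : c ≠ 0 := left_ne_zero_of_smul hz₀ne
  have hw0 : w ≠ 0 := right_ne_zero_of_smul hz₀ne
  have hwL : w ∈ LinearMap.ker L := by
    rw [LinearMap.mem_ker, map_smul, smul_eq_zero_iff_right hc0] at hz₀L
    exact hz₀L
  obtain ⟨i₀, hi₀⟩ := Function.ne_iff.1 hw0
  obtain ⟨a, b, rfl, hca, -⟩ := (hz₀h i₀).exists_isHomogeneous_of_mul hc0 hi₀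
  have hwh : ∀ i, (w i).IsHomogeneous b := fun i => (hz₀h i).of_mul_left hca hc0
  obtain rfl : a = 0 := by
    have := hz₀min w b hwL hw0 hwh
    omega
  rw [← totalDegree_zero_iff_isHomogeneous, totalDegree_eq_zero_iff_eq_C] at hca
  rw [hca] at hc0 ⊢
  exact (isUnit_iff_ne_zero.2 fun h => hc0 (by rw [h, map_zero])).map C

theorem syzygy_quotient_torsionFree_general {k : Type*} [Field k] {n : ℕ}
    (f : Fin 3 → MvPolynomial (Fin n) k)
    (Syz : Submodule (MvPolynomial (Fin n) k) (Fin 3 → MvPolynomial (Fin n) k))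
    (hSyz : Syz = LinearMap.ker
      (Fintype.linearCombination (MvPolynomial (Fin n) k) f))
    (z₀ : Fin 3 → MvPolynomial (Fin n) k) (δ₀ : ℕ)
    (hz₀S : z₀ ∈ Syz) (hz₀ne : z₀ ≠ 0)
    (hz₀h : ∀ i, (z₀ i).IsHomogeneous δ₀)
    (hz₀min : ∀ (z : Fin 3 → MvPolynomial (Fin n) k) (e : ℕ),
      z ∈ Syz → z ≠ 0 → (∀ i, (z i).IsHomogeneous e) → δ₀ ≤ e) :
    ∀ (r : MvPolynomial (Fin n) k) (z : Fin 3 → MvPolynomial (Fin n) k),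
      r ≠ 0 → z ∈ Syz →
      r • z ∈ Submodule.span (MvPolynomial (Fin n) k) {z₀} →
      z ∈ Submodule.span (MvPolynomial (Fin n) k) {z₀} := by
  intro r z hr _ hmem
  subst hSyz
  have hz₀prim := isPrimitiveVector_of_isHomogeneous_minimal _ hz₀S hz₀ne hz₀h hz₀min
  exact hz₀prim.mem_span_singleton_of_smul_mem hr hmem

/-- Let `R = k[x_1,…,x_n]` and `J = ⟨f₁,f₂,f₃⟩ ⊂ R` a homogeneous ideal of height `2`
generated by three forms of degree `d` with `f₁, f₂` a regular sequence.  If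
`z₀ = (p₁,p₂,p₃)` is a nonzero homogeneous syzygy of minimal degree in
`Syz(J) = ker((a₁,a₂,a₃) ↦ Σ aᵢfᵢ)`, then `Syz(J)/R·z₀` is torsion-free:
whenever `r ∈ R` is nonzero, `z ∈ Syz(J)` and `r·z ∈ R·z₀`, already `z ∈ R·z₀`. -/
theorem syzygy_quotient_torsionFree {k : Type*} [Field k] {n : ℕ} (hn : 3 ≤ n)
    (d : ℕ) (f : Fin 3 → MvPolynomial (Fin n) k)
    (hf : ∀ i, (f i).IsHomogeneous d)
    (hht : idealHeight (Ideal.span (Set.range f)) = 2)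
    (hreg : RingTheory.Sequence.IsRegular (MvPolynomial (Fin n) k) [f 0, f 1])
    (Syz : Submodule (MvPolynomial (Fin n) k) (Fin 3 → MvPolynomial (Fin n) k))
    (hSyz : Syz = LinearMap.ker
      (Fintype.linearCombination (MvPolynomial (Fin n) k) f))
    (z₀ : Fin 3 → MvPolynomial (Fin n) k) (δ₀ : ℕ)
    (hz₀S : z₀ ∈ Syz) (hz₀ne : z₀ ≠ 0)
    (hz₀h : ∀ i, (z₀ i).IsHomogeneous δ₀)
    (hz₀min : ∀ (z : Fin 3 → MvPolynomial (Fin n) k) (e : ℕ),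
      z ∈ Syz → z ≠ 0 → (∀ i, (z i).IsHomogeneous e) → δ₀ ≤ e) :
    ∀ (r : MvPolynomial (Fin n) k) (z : Fin 3 → MvPolynomial (Fin n) k),
      r ≠ 0 → z ∈ Syz →
      r • z ∈ Submodule.span (MvPolynomial (Fin n) k) {z₀} →
      z ∈ Submodule.span (MvPolynomial (Fin n) k) {z₀} :=
  syzygy_quotient_torsionFree_general f Syz hSyz z₀ δ₀ hz₀S hz₀ne hz₀h hz₀min
end

section
/- With η = [A; B] an (m+1)×m block matrix over R = k[x_1,…,x_n] (A of size 3×m, B of size (m−2)×m) and p_1,…,p_{m+1} its signed maximal minors ordered so that p_1,p_2,p_3 fix B, one has the inclusion I_{m−2}(B)·⟨p_4,…,p_{m+1}⟩ ⊆ ⟨p_1,p_2,p_3⟩; consequently I_{m−2}(B) ⊆ (⟨p_1,p_2,p_3⟩ : I_m(η)). -/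
/-!
The Laplace expansion of `η` with one of its columns repeated gives `∑ᵢ pᵢ ηᵢⱼ = 0`, so the row
vector `(p₄, …, p_{m+1})` times `B` has all entries in `J = ⟨p₁, p₂, p₃⟩`. Multiplying on the right
by the adjugate of a maximal square submatrix `M` of `B` turns this into `det M · pᵢ ∈ J`. For the
colon ideal, every maximal minor of `η` is, up to sign, one of the `pᵢ`.
-/
open MvPolynomial

def minorsIdeal {R : Type*} [CommRing R] {a b : ℕ} (M : Matrix (Fin a) (Fin b) R)
    (t : ℕ) : Ideal R :=
  Ideal.span { d | ∃ (r : Fin t → Fin a) (c : Fin t → Fin b), d = (M.submatrix r c).det }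

/-- the `i`-th signed maximal minor of an `(m+1) × m` matrix. -/
def signedMinor {R : Type*} [CommRing R] {m : ℕ} (η : Matrix (Fin (m + 1)) (Fin m) R)
    (i : Fin (m + 1)) : R :=
  (-1 : R) ^ (i : ℕ) * (η.submatrix i.succAbove id).det

open Matrix

namespace Matrix

variable {R : Type*} [CommRing R]

theorem sum_signedMinor_mul_eq_zero {m : ℕ} (η : Matrix (Fin (m + 1)) (Fin m) R) (j : Fin m) :
    ∑ i, signedMinor η i * η i j = 0 := by
  -- `N` is `η` with column `j` prepended; expand its vanishing determinant along column `0`.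
  let N : Matrix (Fin (m + 1)) (Fin (m + 1)) R := of fun a => Fin.cons (η a j) (η a)
  have hN : N.det = 0 := det_zero_of_column_eq (Fin.succ_ne_zero j).symm fun a => rfl
  rw [det_succ_column_zero] at hN
  rw [← hN]
  refine Finset.sum_congr rfl fun i _ => ?_
  simp only [signedMinor, N]
  rw [mul_right_comm]
  rfl

theorem det_submatrix_eq_zero_of_not_injective_left {ι κ n : Type*} [Fintype n] [DecidableEq n]
    (M : Matrix ι κ R) {r : n → ι} (hr : ¬ Function.Injective r) (c : n → κ) :
    (M.submatrix r c).det = 0 := by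
  obtain ⟨x, y, hxy, hne⟩ := Function.not_injective_iff.mp hr
  exact det_zero_of_row_eq hne (funext fun s => by simp [hxy])

theorem det_submatrix_eq_zero_of_not_injective_right {ι κ n : Type*} [Fintype n] [DecidableEq n]
    (M : Matrix ι κ R) (r : n → ι) {c : n → κ} (hc : ¬ Function.Injective c) :
    (M.submatrix r c).det = 0 := by
  obtain ⟨x, y, hxy, hne⟩ := Function.not_injective_iff.mp hc
  exact det_zero_of_column_eq hne fun s => by simp [hxy]

theorem det_submatrix_equiv_equiv {n o : Type*} [Fintype n] [DecidableEq n] [Fintype o]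
    [DecidableEq o] (A : Matrix o o R) (e₁ e₂ : n ≃ o) :
    (A.submatrix e₁ e₂).det = Equiv.Perm.sign (e₁.symm.trans e₂) * A.det := by
  have hsplit : A.submatrix e₁ e₂ = (A.submatrix id (e₁.symm.trans e₂)).submatrix e₁ e₁ := by
    ext; simp
  rw [hsplit, det_submatrix_equiv_self, det_permute']

theorem det_mul_mem_of_vecMul_mem {ι : Type*} [Fintype ι] [DecidableEq ι] (M : Matrix ι ι R)
    {a : ι → R} {I : Ideal R} (h : ∀ j, (a ᵥ* M) j ∈ I) (i : ι) : M.det * a i ∈ I := by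
  have hadj : (a ᵥ* M) ᵥ* M.adjugate = M.det • a := by
    rw [vecMul_vecMul, mul_adjugate, vecMul_smul, vecMul_one]
  rw [← smul_eq_mul, ← Pi.smul_apply, ← hadj]
  exact I.sum_mem fun j _ => I.mul_mem_right _ (h j)

theorem det_submatrix_mul_mem_of_vecMul_mem {ι κ : Type*} [Fintype ι] [DecidableEq ι]
    (N : Matrix ι κ R) {a : ι → R} {I : Ideal R} (h : ∀ j, (a ᵥ* N) j ∈ I)
    (r : ι → ι) (c : ι → κ) (i : ι) : (N.submatrix r c).det * a i ∈ I := by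
  by_cases hr : Function.Injective r
  · let e := Equiv.ofBijective r (Finite.injective_iff_bijective.mp hr)
    have hvec : ∀ j, ((a ∘ e) ᵥ* N.submatrix e c) j ∈ I := fun j => by
      rw [submatrix_vecMul_equiv, Function.comp_assoc, e.self_comp_symm, Function.comp_id]
      exact h (c j)
    have := det_mul_mem_of_vecMul_mem _ hvec (e.symm i)
    rwa [Function.comp_apply, e.apply_symm_apply] at this
  · rw [det_submatrix_eq_zero_of_not_injective_left N hr c, zero_mul]
    exact I.zero_mem

theorem det_submatrix_mem_span_signedMinor {m : ℕ}
    (η : Matrix (Fin (m + 1)) (Fin m) R) (r : Fin m → Fin (m + 1)) (c : Fin m → Fin m) :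
    (η.submatrix r c).det ∈ Ideal.span (Set.range (signedMinor η)) := by
  by_cases hc : Function.Injective c
  swap
  · simp [η.det_submatrix_eq_zero_of_not_injective_right r hc]
  by_cases hr : Function.Injective r
  swap
  · simp [η.det_submatrix_eq_zero_of_not_injective_left hr c]
  obtain ⟨i, hi⟩ : ∃ i, i ∉ Set.range r := by
    by_contra! h
    simpa using Fintype.card_le_of_surjective r h
  choose σ hσ using fun t => Fin.exists_succAbove_eq (x := r t) fun h => hi ⟨t, h⟩
  have hσ_inj : Function.Injective σ := fun x y hxy => hr (by rw [← hσ x, ← hσ y, hxy])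
  let eσ := Equiv.ofBijective σ (Finite.injective_iff_bijective.mp hσ_inj)
  let ec := Equiv.ofBijective c (Finite.injective_iff_bijective.mp hc)
  have hsub : η.submatrix r c = (η.submatrix i.succAbove id).submatrix eσ ec := by
    ext; simp [eσ, ec, hσ]
  have hdet : (η.submatrix i.succAbove id).det = (-1) ^ (i : ℕ) * signedMinor η i := by
    rw [signedMinor, ← mul_assoc, ← pow_add, Even.neg_one_pow ⟨_, rfl⟩, one_mul]
  rw [hsub, det_submatrix_equiv_equiv, hdet]
  exact Ideal.mul_mem_left _ _ (Ideal.mul_mem_left _ _ (Ideal.subset_span ⟨i, rfl⟩))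

end Matrix

theorem minorsIdeal_le_span_signedMinor {R : Type*} [CommRing R] {m : ℕ}
    (η : Matrix (Fin (m + 1)) (Fin m) R) :
    minorsIdeal η m ≤ Ideal.span (Set.range (signedMinor η)) :=
  Ideal.span_le.mpr fun _ ⟨r, c, hd⟩ => hd ▸ η.det_submatrix_mem_span_signedMinor r c

theorem Ideal.sum_comp_mem_of_sum_mem {R ι κ : Type*} [CommRing R] [Fintype ι] [Fintype κ]
    {I : Ideal R} {f : κ → R} (hsum : ∑ k, f k ∈ I) {e : ι → κ} (he : Function.Injective e)
    (hf : ∀ k ∉ Set.range e, f k ∈ I) : ∑ i, f (e i) ∈ I := by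
  classical
  rw [← Finset.sum_add_sum_compl (Finset.univ.map ⟨e, he⟩), Finset.sum_map] at hsum
  refine (I.add_mem_iff_left (I.sum_mem fun k hk => hf k ?_)).mp hsum
  simpa using hk

theorem minorsIdeal_mul_span_le_of_vecMul_mem {R : Type*} [CommRing R] {a b : ℕ}
    (N : Matrix (Fin a) (Fin b) R) {v : Fin a → R} {I : Ideal R} (h : ∀ j, (v ᵥ* N) j ∈ I) :
    minorsIdeal N a * Ideal.span (Set.range v) ≤ I := by
  rw [minorsIdeal, Ideal.span_mul_span']
  refine Ideal.span_le.mpr ?_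
  rintro _ ⟨_, ⟨r, c, rfl⟩, _, ⟨i, rfl⟩, rfl⟩
  exact N.det_submatrix_mul_mem_of_vecMul_mem h r c i

theorem Ideal.span_range_le_span_range_comp_sup {R ι κ : Type*} [CommRing R] {I : Ideal R}
    {f : κ → R} {e : ι → κ} (hf : ∀ k ∉ Set.range e, f k ∈ I) :
    Ideal.span (Set.range f) ≤ Ideal.span (Set.range (f ∘ e)) ⊔ I := by
  refine Ideal.span_le.mpr ?_
  rintro _ ⟨k, rfl⟩
  by_cases hk : k ∈ Set.range e
  · obtain ⟨i, rfl⟩ := hk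
    exact Ideal.mem_sup_left (Ideal.subset_span ⟨i, rfl⟩)
  · exact Ideal.mem_sup_right (hf k hk)

theorem Ideal.le_colon_of_mul_le {R : Type*} [CommRing R] {I J K : Ideal R} (h : I * K ≤ J) :
    I ≤ Submodule.colon J (K : Set R) :=
  fun _ hd => Submodule.mem_colon.mpr fun _ hq => h (Ideal.mul_mem_mul hd hq)

/-- Let `η = [A; B]` be an `(m+1) × m` block matrix over `R = k[x_1,…,x_n]`, with `A` the
first three rows and `B` the remaining `m−2` rows, and `p₁,…,p_{m+1}` its signed maximal
minors, `p₁,p₂,p₃` those fixing `B`.  Then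
`I_{m−2}(B)·⟨p₄,…,p_{m+1}⟩ ⊆ ⟨p₁,p₂,p₃⟩`, and consequently
`I_{m−2}(B) ⊆ (⟨p₁,p₂,p₃⟩ : I_m(η))`. -/
theorem minors_of_B_multiply_into_first_three {k : Type*} [Field k] {n : ℕ}
    {m : ℕ} (hm : 3 ≤ m)
    (η : Matrix (Fin (m + 1)) (Fin m) (MvPolynomial (Fin n) k))
    (B : Matrix (Fin (m - 2)) (Fin m) (MvPolynomial (Fin n) k))
    (hB : ∀ (i : Fin (m - 2)) (j : Fin m),
      B i j = η ⟨(i : ℕ) + 3, by have := i.isLt; omega⟩ j)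
    (J : Ideal (MvPolynomial (Fin n) k))
    (hJ : J = Ideal.span {signedMinor η ⟨0, by omega⟩, signedMinor η ⟨1, by omega⟩,
      signedMinor η ⟨2, by omega⟩}) :
    minorsIdeal B (m - 2) *
        Ideal.span (Set.range fun i : Fin (m - 2) =>
          signedMinor η ⟨(i : ℕ) + 3, by have := i.isLt; omega⟩) ≤ J ∧
      minorsIdeal B (m - 2) ≤ Submodule.colon (J : Submodule (MvPolynomial (Fin n) k)
        (MvPolynomial (Fin n) k)) (minorsIdeal η m) := by
  let e : Fin (m - 2) → Fin (m + 1) := fun i => ⟨(i : ℕ) + 3, by omega⟩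
  have he : Function.Injective e := fun i j h => Fin.ext (by simpa [e] using congrArg Fin.val h)
  obtain rfl : B = η.submatrix e id := Matrix.ext hB
  have hJ_first : ∀ i ∉ Set.range e, signedMinor η i ∈ J := by
    rintro ⟨_ | _ | _ | i, hi⟩ hrange
    · exact hJ ▸ Ideal.subset_span (by simp)
    · exact hJ ▸ Ideal.subset_span (by simp)
    · exact hJ ▸ Ideal.subset_span (by simp)
    · exact absurd ⟨⟨i, by omega⟩, Fin.ext (by simp [e])⟩ hrange
  have hvec : ∀ j, ((signedMinor η ∘ e) ᵥ* η.submatrix e id) j ∈ J := fun j =>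
    Ideal.sum_comp_mem_of_sum_mem (f := fun i => signedMinor η i * η i j)
      (by rw [η.sum_signedMinor_mul_eq_zero j]; exact J.zero_mem) he
      fun i hi => J.mul_mem_right _ (hJ_first i hi)
  have hprod := minorsIdeal_mul_span_le_of_vecMul_mem _ hvec
  refine ⟨hprod, Ideal.le_colon_of_mul_le ?_⟩
  calc minorsIdeal (η.submatrix e id) (m - 2) * minorsIdeal η m
      ≤ minorsIdeal (η.submatrix e id) (m - 2) *
          (Ideal.span (Set.range (signedMinor η ∘ e)) ⊔ J) :=
        Ideal.mul_mono_right ((minorsIdeal_le_span_signedMinor η).trans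
          (Ideal.span_range_le_span_range_comp_sup hJ_first))
    _ = _ ⊔ _ := Ideal.mul_sup _ _ _
    _ ≤ J := sup_le hprod Ideal.mul_le_right
end

section
/- Let (d, m, δ, ε) be latent data and η = [A; B] a (d,m,δ,ε)-level matrix, K the m×m skew-symmetric matrix of signed maximal minors of B. Then for all 1 ≤ i ≤ 3 and 1 ≤ j ≤ m, the (i,j) entry of the product matrix AK is homogeneous of degree δ_j. -/
open MvPolynomial

/-- The `m × m` skew-symmetric matrix `K` whose `(u,v)` entry, for `u ≠ v`, is
`(−1)^{u−v} Δ_{u,v}`, where `Δ_{u,v}` is the maximal minor of the `(m−2) × m` matrix `B`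
omitting columns `u` and `v` (columns taken in increasing order). -/
noncomputable def kmat {R : Type*} [CommRing R] {m : ℕ}
    (B : Matrix (Fin (m - 2)) (Fin m) R) : Matrix (Fin m) (Fin m) R :=
  Matrix.of fun u v =>
    if h : u = v then 0
    else
      (-1 : R) ^ ((u : ℕ) + (v : ℕ)) *
        (B.submatrix id (fun j =>
          ((({u, v}ᶜ : Finset (Fin m)).orderIsoOfFin (by
            have h2 : ({u, v} : Finset (Fin m)).card = 2 := by
              rw [Finset.card_insert_of_notMem (by simpa using h), Finset.card_singleton]
            rw [Finset.card_compl, h2, Fintype.card_fin]) j :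
              {x // x ∈ ({u, v}ᶜ : Finset (Fin m))}) : Fin m))).det

/-!
Each summand `a_{i,u} K_{u,j}` of `(A K)_{i,j}` is homogeneous of degree `δ_j`: the entry
`a_{i,u}` has degree `d - δ_u`, and `K_{u,j}`, a maximal minor of `B` whose row `l` has
entries of degree `δ_{l+2} + ε_l - δ_c`, has degree
`∑_l (δ_{l+2} + ε_l) - ∑_{c ≠ u, j} δ_c = δ_u + δ_j - d` because `δ_1 + δ_2 = d + ∑ ε_l`.
Degrees are taken in `ℤ`, so that vanishing entries, whose formal degree may be negative,
need no separate treatment.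
-/

theorem Finsupp.weight_const_one_int {σ : Type*} (f : σ →₀ ℕ) :
    Finsupp.weight (fun _ : σ => (1 : ℤ)) f = (Finsupp.weight 1 f : ℕ) := by
  simp [Finsupp.weight_apply, Finsupp.sum]

theorem Fin.sum_univ_eq_add_add_sum_sub_two {M : Type*} [AddCommMonoid M] {m : ℕ} (hm : 2 ≤ m)
    (f : Fin m → M) :
    ∑ c, f c = f ⟨0, by omega⟩ + f ⟨1, by omega⟩ +
      ∑ l : Fin (m - 2), f ⟨l + 2, by have := l.isLt; omega⟩ := by
  obtain ⟨s, rfl⟩ : ∃ s, m = s + 2 := ⟨m - 2, by omega⟩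
  simp only [Fin.sum_univ_succ, add_assoc]
  rfl

namespace MvPolynomial

variable {σ R M : Type*} [CommRing R]

section AddCommMonoid

variable [AddCommMonoid M] {w : σ → M}

theorem IsWeightedHomogeneous.det {ι : Type*} [Fintype ι] [DecidableEq ι]
    {N : Matrix ι ι (MvPolynomial σ R)} (a b : ι → M)
    (h : ∀ i j, IsWeightedHomogeneous w (N i j) (a i + b j)) :
    IsWeightedHomogeneous w N.det (∑ i, a i + ∑ j, b j) := by
  rw [Matrix.det_apply']
  refine IsWeightedHomogeneous.sum _ _ _ fun τ _ => ?_
  have hprod : IsWeightedHomogeneous w (∏ i, N (τ i) i) (∑ i, (a (τ i) + b i)) :=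
    IsWeightedHomogeneous.prod _ _ _ fun i _ => h _ _
  rw [Finset.sum_add_distrib, Equiv.sum_comp τ a] at hprod
  rw [← map_intCast (C : R →+* MvPolynomial σ R)]
  exact hprod.C_mul _

end AddCommMonoid

section AddCommGroup

variable [AddCommGroup M] {w : σ → M}

theorem isWeightedHomogeneous_det_submatrix_orderIsoOfFin {β : Type*} [LinearOrder β] {r : ℕ}
    {B : Matrix (Fin r) β (MvPolynomial σ R)} (e : Fin r → M) (δ : β → M)
    (hB : ∀ l c, IsWeightedHomogeneous w (B l c) (e l - δ c)) (t : Finset β) (ht : t.card = r) :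
    IsWeightedHomogeneous w (B.submatrix id fun j => (t.orderIsoOfFin ht j : β)).det
      (∑ l, e l - ∑ c ∈ t, δ c) := by
  have hdet := IsWeightedHomogeneous.det e (fun j => -δ (t.orderIsoOfFin ht j))
    fun l j => by simpa [sub_eq_add_neg] using hB l _
  rwa [Finset.sum_neg_distrib, (t.orderIsoOfFin ht).bijective.sum_comp fun c : t => δ c,
    Finset.sum_coe_sort t δ, ← sub_eq_add_neg] at hdet

theorem isWeightedHomogeneous_kmat_apply {m : ℕ}
    {B : Matrix (Fin (m - 2)) (Fin m) (MvPolynomial σ R)}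
    (e : Fin (m - 2) → M) (δ : Fin m → M)
    (hB : ∀ l c, IsWeightedHomogeneous w (B l c) (e l - δ c)) (u v : Fin m) :
    IsWeightedHomogeneous w (kmat B u v) (∑ l, e l - ∑ c, δ c + δ u + δ v) := by
  rw [kmat, Matrix.of_apply]
  split_ifs with huv
  · exact isWeightedHomogeneous_zero R w _
  · have hsign : IsWeightedHomogeneous w ((-1 : MvPolynomial σ R) ^ ((u : ℕ) + v)) 0 := by
      simpa using (isWeightedHomogeneous_one R w).neg.pow ((u : ℕ) + v)
    convert hsign.mul (isWeightedHomogeneous_det_submatrix_orderIsoOfFin e δ hB _ _) using 1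
    rw [← Finset.sum_compl_add_sum {u, v} δ, Finset.sum_pair huv]
    abel

end AddCommGroup

theorem isWeightedHomogeneous_one_int_iff {p : MvPolynomial σ R} {n : ℕ} :
    IsWeightedHomogeneous (fun _ => (1 : ℤ)) p n ↔ p.IsHomogeneous n := by
  simp only [IsHomogeneous, IsWeightedHomogeneous, Finsupp.weight_const_one_int, Nat.cast_inj]

theorem isWeightedHomogeneous_one_int_sub_of_ite {P : Prop} [Decidable P] {p : MvPolynomial σ R}
    {a b : ℕ} (hP : P → b ≤ a) (h : if P then p.IsHomogeneous (a - b) else p = 0) :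
    IsWeightedHomogeneous (fun _ => (1 : ℤ)) p ((a : ℤ) - b) := by
  split_ifs at h with hp
  · rw [← Nat.cast_sub (hP hp)]
    exact isWeightedHomogeneous_one_int_iff.2 h
  · rw [h]
    exact isWeightedHomogeneous_zero R _ _

end MvPolynomial

theorem level_matrix_AK_entries_homogeneous
{k : Type*} [Field k] {n : ℕ}
    (d m : ℕ) (hm : 3 ≤ m)
    (δ : Fin m → ℕ) (ε : Fin (m - 2) → ℕ)
    (hc2 : δ ⟨0, by omega⟩ + δ ⟨1, by omega⟩ = d + ∑ j, ε j)
    (A : Matrix (Fin 3) (Fin m) (MvPolynomial (Fin n) k))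
    (B : Matrix (Fin (m - 2)) (Fin m) (MvPolynomial (Fin n) k))
    (hAdeg : ∀ (i : Fin 3) (j : Fin m),
      if δ j ≤ d then (A i j).IsHomogeneous (d - δ j) else A i j = 0)
    (hBdeg : ∀ (i : Fin (m - 2)) (j : Fin m),
      if δ j < δ ⟨(i : ℕ) + 2, by have := i.isLt; omega⟩ + ε i then
        (B i j).IsHomogeneous (δ ⟨(i : ℕ) + 2, by have := i.isLt; omega⟩ + ε i - δ j)
      else B i j = 0) :
    ∀ (i : Fin 3) (j : Fin m), ((A * kmat B) i j).IsHomogeneous (δ j) := by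
  intro i j
  set e : Fin (m - 2) → ℤ := fun l => ((δ ⟨l + 2, by have := l.isLt; omega⟩ + ε l : ℕ) : ℤ)
  have hB : ∀ l c, IsWeightedHomogeneous (fun _ => (1 : ℤ)) (B l c) (e l - δ c) :=
    fun l c => isWeightedHomogeneous_one_int_sub_of_ite le_of_lt (hBdeg l c)
  have hdeg : ∑ l, e l - ∑ c, (δ c : ℤ) = -d := by
    have hc2' : (δ ⟨0, by omega⟩ + δ ⟨1, by omega⟩ : ℤ) = d + ∑ l, (ε l : ℤ) := by
      exact_mod_cast hc2
    rw [Fin.sum_univ_eq_add_add_sum_sub_two (by omega) fun c => (δ c : ℤ)]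
    simp only [e, Nat.cast_add, Finset.sum_add_distrib]
    linarith
  rw [← isWeightedHomogeneous_one_int_iff, Matrix.mul_apply]
  refine IsWeightedHomogeneous.sum _ _ _ fun u _ => ?_
  convert (isWeightedHomogeneous_one_int_sub_of_ite id (hAdeg i u)).mul
    (isWeightedHomogeneous_kmat_apply e (fun c => (δ c : ℤ)) hB u j) using 1
  linarith
end
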